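/- If e is normally distributed with mean 0 and variance σ_e², then for the model u-decomposition with η = Φ^{-1}(F_e(e)) one has η = e/σ_e almost surely; consequently the linear combination δ'x·λ₃ − λ₃ z + λ₃σ_e η = 0 holds a.s. for any λ₃, showing non-identification. -/

import Mathlib

open MeasureTheory ProbabilityTheory Matrix

noncomputable def stdPhi (x : ℝ) : ℝ := ∫ t in Set.Iic x, gaussianPDFReal 0 1 t
noncomputable def stdPhiInv (u : ℝ) : ℝ := sInf {x : ℝ | u ≤ stdPhi x}

/-! Since `F_e(t) = Φ(t / σ_e)` and `Φ` is strictly increasing, the generalized inverse `Φ⁻¹`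
undoes `Φ` exactly, so `η = Φ⁻¹(Φ(e / σ_e)) = e / σ_e` at every sample point; the linear
combination then vanishes identically because `z - δ'x = e = σ_e η`. -/

lemma stdPhi_eq_gaussianReal_Iic (x : ℝ) :
    stdPhi x = (gaussianReal 0 1 (Set.Iic x)).toReal := by
  rw [gaussianReal_apply_eq_integral _ one_ne_zero, ENNReal.toReal_ofReal
    (setIntegral_nonneg measurableSet_Iic fun t _ => gaussianPDFReal_nonneg 0 1 t)]
  rfl

lemma stdPhi_strictMono : StrictMono stdPhi := by
  intro a b hab
  have hint := integrable_gaussianPDFReal 0 1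
  have hsplit : stdPhi b = stdPhi a + ∫ t in Set.Ioc a b, gaussianPDFReal 0 1 t := by
    rw [stdPhi, ← Set.Iic_union_Ioc_eq_Iic hab.le,
      setIntegral_union (Set.Iic_disjoint_Ioc le_rfl) measurableSet_Ioc
        hint.integrableOn hint.integrableOn]
    rfl
  have hpos : 0 < ∫ t in Set.Ioc a b, gaussianPDFReal 0 1 t := by
    rw [← intervalIntegral.integral_of_le hab.le]
    exact intervalIntegral.intervalIntegral_pos_of_pos_on hint.intervalIntegrable
      (fun t _ => gaussianPDFReal_pos 0 1 t one_ne_zero) hab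
  linarith

lemma stdPhiInv_stdPhi (y : ℝ) : stdPhiInv (stdPhi y) = y := by
  have hsuper : {x : ℝ | stdPhi y ≤ stdPhi x} = Set.Ici y := by
    ext x
    simp [stdPhi_strictMono.le_iff_le]
  rw [stdPhiInv, hsuper, csInf_Ici]

lemma gaussianReal_Iic_toReal (μ : ℝ) {v : NNReal} (hv : v ≠ 0) (t : ℝ) :
    (gaussianReal μ v (Set.Iic t)).toReal = stdPhi ((t - μ) / Real.sqrt v) := by
  set σ := Real.sqrt v
  have hσ : 0 < σ := Real.sqrt_pos.mpr (by positivity)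
  have hstd : (gaussianReal 0 1).map (fun y => σ * y + μ) = gaussianReal μ v := by
    rw [← Function.comp_def (· + μ) (σ * ·),
      ← Measure.map_map (measurable_add_const μ) (measurable_const_mul σ),
      gaussianReal_map_const_mul, gaussianReal_map_add_const]
    congr 1
    · simp
    · ext
      simp [σ]
  have hpre : (fun y => σ * y + μ) ⁻¹' Set.Iic t = Set.Iic ((t - μ) / σ) := by
    ext y
    simp only [Set.mem_preimage, Set.mem_Iic, le_div_iff₀ hσ]
    constructor <;> intro h <;> linarith
  rw [← hstd, Measure.map_apply (by fun_prop) measurableSet_Iic, hpre,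
    stdPhi_eq_gaussianReal_Iic]

theorem stmt15_general {Ω : Type*} [MeasurableSpace Ω] (P : Measure Ω) [IsProbabilityMeasure P]
    (k : ℕ) (x : Ω → Fin k → ℝ)
    (e : Ω → ℝ) (he : Measurable e)
    (σe2 : NNReal) (hσ : 0 < σe2)
    (hgauss : Measure.map e P = gaussianReal 0 σe2)
    (F : ℝ → ℝ) (hF : ∀ t, F t = (P {ω | e ω ≤ t}).toReal)
    (δ : Fin k → ℝ) (z : Ω → ℝ) (hz : ∀ ω, z ω = δ ⬝ᵥ x ω + e ω)
    (η : Ω → ℝ) (hη : ∀ ω, η ω = stdPhiInv (F (e ω))) :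
    (∀ᵐ ω ∂P, η ω = e ω / Real.sqrt (σe2 : ℝ)) ∧
      ∀ l3 : ℝ, ∀ᵐ ω ∂P,
        l3 * (δ ⬝ᵥ x ω) - l3 * z ω + l3 * Real.sqrt (σe2 : ℝ) * η ω = 0 := by
  have hσ' : Real.sqrt (σe2 : ℝ) ≠ 0 := (Real.sqrt_pos.mpr (by exact_mod_cast hσ)).ne'
  have hF_eq : ∀ t, F t = stdPhi (t / Real.sqrt (σe2 : ℝ)) := fun t => by
    rw [hF, ← sub_zero t, ← gaussianReal_Iic_toReal 0 hσ.ne', ← hgauss,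
      Measure.map_apply he measurableSet_Iic, sub_zero]
    rfl
  have hη_eq : ∀ ω, η ω = e ω / Real.sqrt (σe2 : ℝ) := fun ω => by
    rw [hη, hF_eq, stdPhiInv_stdPhi]
  refine ⟨ae_of_all _ hη_eq, fun l3 => ae_of_all _ fun ω => ?_⟩
  rw [hη_eq, hz]
  field_simp
  ring

/-- If `e ~ N(0, σ_e²)`, then `η = Φ⁻¹(F_e(e)) = e/σ_e` a.s., and consequently, with
`z = δ'x + e`, the linear combination `λ₃·δ'x − λ₃z + λ₃σ_e·η = 0` holds a.s. for any
`λ₃`, showing non-identification. -/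
theorem stmt15 {Ω : Type*} [MeasurableSpace Ω] (P : Measure Ω) [IsProbabilityMeasure P]
    (k : ℕ) (x : Ω → Fin k → ℝ) (hx : Measurable x)
    (e : Ω → ℝ) (he : Measurable e) (hindep : IndepFun e x P)
    (σe2 : NNReal) (hσ : 0 < σe2)
    (hgauss : Measure.map e P = gaussianReal 0 σe2)
    (F : ℝ → ℝ) (hF : ∀ t, F t = (P {ω | e ω ≤ t}).toReal)
    (δ : Fin k → ℝ) (z : Ω → ℝ) (hz : ∀ ω, z ω = δ ⬝ᵥ x ω + e ω)
    (η : Ω → ℝ) (hη : ∀ ω, η ω = stdPhiInv (F (e ω))) :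
    (∀ᵐ ω ∂P, η ω = e ω / Real.sqrt (σe2 : ℝ)) ∧
      ∀ l3 : ℝ, ∀ᵐ ω ∂P,
        l3 * (δ ⬝ᵥ x ω) - l3 * z ω + l3 * Real.sqrt (σe2 : ℝ) * η ω = 0 :=
  stmt15_general P k x e he σe2 hσ hgauss F hF δ z hz η hη
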